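/- arXiv:1204.2384 — 7 statements merged into one kernel-verified Lean document; each statement's English description precedes it below -/
import Mathlib

section
/- Let M be a left cancellative monoid generated by a finite set A, and suppose M admits a finite presentation ⟨A | R⟩. Let n = max{|u| + |v| : (u = v) ∈ R}. Then for any two parallel directed paths p and q in the right Cayley graph Γ of M over A (i.e., paths with the same start vertex and the same end vertex), the words labelling p and q represent the same element of M, and consequently p and q are homotopic in the directed 2-complex K_n(Γ) whose 2-cells are pairs of parallel paths of total length at most n. -/
/-- The element of the monoid `M` represented by the word `w` over the alphabet `A`,
where `f : A → M` interprets the letters. -/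
def wordProd {A M : Type*} [Monoid M] (f : A → M) (w : List A) : M := (w.map f).prod

/-- One application of a defining relation from `R`: replace a factor `s` by `t`
where `(s, t) ∈ R` or `(t, s) ∈ R`. -/
def OneStep {A : Type*} (R : Set (List A × List A)) (w w' : List A) : Prop :=
  ∃ u s t v : List A, ((s, t) ∈ R ∨ (t, s) ∈ R) ∧ w = u ++ s ++ v ∧ w' = u ++ t ++ v

/-- `⟨A | R⟩` (via `f : A → M`) is a presentation of `M`: `f` generates `M` (every element
is represented by a word) and two words represent the same element of `M` exactly when
they are related by the congruence generated by `R`. -/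
def Presents {A M : Type*} [Monoid M] (f : A → M) (R : Set (List A × List A)) : Prop :=
  Function.Surjective (wordProd f) ∧
    ∀ u v : List A, Relation.ReflTransGen (OneStep R) u v ↔ wordProd f u = wordProd f v

/-- An atomic homotopy in the directed 2-complex `K_n` of the right Cayley graph of `M`
over `A`: a path in the Cayley graph starting at `x` and labelled `u ++ s ++ v` is replaced
by the path labelled `u ++ t ++ v`, where the subpaths labelled `s` and `t` starting at the
vertex `x * (u)` are parallel (same endpoints) and `|s| + |t| ≤ n`, i.e. they form a
2-cell of `K_n`. -/
def KStep {A M : Type*} [Monoid M] (f : A → M) (n : ℕ) (p q : M × List A) : Prop :=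
  ∃ (x : M) (u s t v : List A),
    p = (x, u ++ s ++ v) ∧ q = (x, u ++ t ++ v) ∧
    x * wordProd f u * wordProd f s = x * wordProd f u * wordProd f t ∧
    s.length + t.length ≤ n

/-- Two paths in the right Cayley graph (given as a start vertex together with a label
word over `A`) are homotopic in `K_n` if one can be transformed into the other by a finite
sequence of 2-cell replacements. -/
def Homotopic {A M : Type*} [Monoid M] (f : A → M) (n : ℕ) :
    M × List A → M × List A → Prop :=
  Relation.ReflTransGen (KStep f n)

/-- The right Cayley graph of `M` over `A` is `n`-quasi-simply-connected: every pair of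
parallel paths (same start vertex `x`, same end vertex) is homotopic in `K_n`. -/
def NQSC {A M : Type*} [Monoid M] (f : A → M) (n : ℕ) : Prop :=
  ∀ (x : M) (w₁ w₂ : List A), x * wordProd f w₁ = x * wordProd f w₂ →
    Homotopic f n (x, w₁) (x, w₂)

/-! Left cancellation turns parallel paths into words with equal values in `M`; the presentation
links such words by single applications of relations, and each application is a 2-cell of `K_n`
because every relation has total length at most `n`. -/

section

variable {A M : Type*} [Monoid M] {f : A → M} {R : Set (List A × List A)}

theorem Presents.wordProd_eq_of_mem (h : Presents f R) {s t : List A} (hst : (s, t) ∈ R) :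
    wordProd f s = wordProd f t :=
  (h.2 s t).mp (.single ⟨[], s, t, [], .inl hst, by simp, by simp⟩)

theorem kStep_of_oneStep {n : ℕ}
    (hR : ∀ p ∈ R, wordProd f p.1 = wordProd f p.2 ∧ p.1.length + p.2.length ≤ n)
    (x : M) {w w' : List A} (h : OneStep R w w') : KStep f n (x, w) (x, w') := by
  obtain ⟨u, s, t, v, hst | hts, rfl, rfl⟩ := h
  · obtain ⟨heq, hlen⟩ := hR _ hst
    exact ⟨x, u, s, t, v, rfl, rfl, by rw [heq], hlen⟩
  · obtain ⟨heq, hlen⟩ := hR _ hts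
    exact ⟨x, u, s, t, v, rfl, rfl, by rw [heq], by simp only at hlen; omega⟩

theorem homotopic_of_reflTransGen_oneStep {n : ℕ}
    (hR : ∀ p ∈ R, wordProd f p.1 = wordProd f p.2 ∧ p.1.length + p.2.length ≤ n)
    (x : M) {w w' : List A} (h : Relation.ReflTransGen (OneStep R) w w') :
    Homotopic f n (x, w) (x, w') :=
  h.lift (fun w => (x, w)) fun _ _ => kStep_of_oneStep hR x

end

theorem stmt_6_general {A M : Type} [Monoid M]
    (hcancel : ∀ x a b : M, x * a = x * b → a = b)
    (f : A → M) (R : Finset (List A × List A))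
    (hpres : Presents f (↑R : Set (List A × List A))) :
    ∀ (x : M) (w₁ w₂ : List A), x * wordProd f w₁ = x * wordProd f w₂ →
      wordProd f w₁ = wordProd f w₂ ∧
      Homotopic f (R.sup fun p => p.1.length + p.2.length) (x, w₁) (x, w₂) := by
  intro x w₁ w₂ hx
  have heq : wordProd f w₁ = wordProd f w₂ := hcancel x _ _ hx
  have hR : ∀ p ∈ (↑R : Set (List A × List A)), wordProd f p.1 = wordProd f p.2 ∧
      p.1.length + p.2.length ≤ R.sup fun p => p.1.length + p.2.length :=
    fun p hp =>
      ⟨hpres.wordProd_eq_of_mem hp, Finset.le_sup (f := fun p => p.1.length + p.2.length) hp⟩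
  exact ⟨heq, homotopic_of_reflTransGen_oneStep hR x ((hpres.2 w₁ w₂).mpr heq)⟩

/-- Let `M` be a left cancellative monoid generated by a finite set `A` (via `f : A → M`)
with a finite presentation `⟨A | R⟩`, and let `n = max {|u| + |v| : (u = v) ∈ R}`. Then any
two parallel paths in the right Cayley graph have labels representing the same element of
`M`, and are homotopic in `K_n`. -/
theorem stmt_6 {A M : Type} [Fintype A] [Monoid M]
    (hcancel : ∀ x a b : M, x * a = x * b → a = b)
    (f : A → M) (R : Finset (List A × List A))
    (hpres : Presents f (↑R : Set (List A × List A))) :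
    ∀ (x : M) (w₁ w₂ : List A), x * wordProd f w₁ = x * wordProd f w₂ →
      wordProd f w₁ = wordProd f w₂ ∧
      Homotopic f (R.sup fun p => p.1.length + p.2.length) (x, w₁) (x, w₂) :=
  stmt_6_general hcancel f R hpres
end

section
/- Let M be a left cancellative monoid generated by a finite set A, and suppose that the right Cayley graph Γ of M over A is n-quasi-simply-connected for some n ∈ ℕ. Then M is finitely presented; specifically, M is presented by ⟨A | R⟩ where R is the (finite) set of all relations u = v over A which hold in M and satisfy |u| + |v| ≤ n. -/
/-!
A 2-cell of `K_n` based at the vertex `x * (u)` is a pair of parallel paths `s`, `t` with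
`|s| + |t| ≤ n`; by left cancellation, `s` and `t` then represent the same element of `M`,
so the pair is one of the relations in `R`. A homotopy between the two paths from `1`
labelled `u` and `v` is therefore a chain of applications of relations from `R` turning `u`
into `v`. Conversely every relation of `R` holds in `M`, and `R` is finite because `A` is.
-/

variable {A M : Type*} [Monoid M]

theorem wordProd_append (f : A → M) (u v : List A) :
    wordProd f (u ++ v) = wordProd f u * wordProd f v := by
  simp [wordProd]

def shortRelations (f : A → M) (n : ℕ) : Set (List A × List A) :=
  {p | wordProd f p.1 = wordProd f p.2 ∧ p.1.length + p.2.length ≤ n}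

theorem finite_shortRelations [Finite A] (f : A → M) (n : ℕ) :
    (shortRelations f n).Finite := by
  refine ((List.finite_length_le A n).prod (List.finite_length_le A n)).subset ?_
  rintro ⟨u, v⟩ ⟨-, hlen⟩
  exact ⟨(Nat.le_add_right _ _).trans hlen, (Nat.le_add_left _ _).trans hlen⟩

theorem OneStep.wordProd_eq {f : A → M} {R : Set (List A × List A)}
    (hR : ∀ p ∈ R, wordProd f p.1 = wordProd f p.2) {w w' : List A} (h : OneStep R w w') :
    wordProd f w = wordProd f w' := by
  obtain ⟨u, s, t, v, hst, rfl, rfl⟩ := h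
  have hst' : wordProd f s = wordProd f t := hst.elim (hR _) fun h ↦ (hR _ h).symm
  simp only [wordProd_append, hst']

theorem reflTransGen_oneStep_wordProd_eq {f : A → M} {R : Set (List A × List A)}
    (hR : ∀ p ∈ R, wordProd f p.1 = wordProd f p.2) {w w' : List A}
    (h : Relation.ReflTransGen (OneStep R) w w') : wordProd f w = wordProd f w' := by
  induction h with
  | refl => rfl
  | tail _ hstep ih => exact ih.trans (hstep.wordProd_eq hR)

theorem KStep.oneStep_shortRelations (hcancel : ∀ x a b : M, x * a = x * b → a = b)
    {f : A → M} {n : ℕ} {p q : M × List A} (h : KStep f n p q) :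
    OneStep (shortRelations f n) p.2 q.2 := by
  obtain ⟨x, u, s, t, v, rfl, rfl, hpar, hlen⟩ := h
  exact ⟨u, s, t, v, Or.inl ⟨hcancel _ _ _ hpar, hlen⟩, rfl, rfl⟩

theorem Homotopic.reflTransGen_oneStep_shortRelations
    (hcancel : ∀ x a b : M, x * a = x * b → a = b) {f : A → M} {n : ℕ} {p q : M × List A}
    (h : Homotopic f n p q) : Relation.ReflTransGen (OneStep (shortRelations f n)) p.2 q.2 :=
  Relation.ReflTransGen.lift Prod.snd (fun _ _ ↦ KStep.oneStep_shortRelations hcancel) _ _ h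

theorem presents_shortRelations_of_nqsc (hcancel : ∀ x a b : M, x * a = x * b → a = b)
    {f : A → M} (hgen : Function.Surjective (wordProd f)) {n : ℕ} (hqsc : NQSC f n) :
    Presents f (shortRelations f n) := by
  refine ⟨hgen, fun u v ↦
    ⟨reflTransGen_oneStep_wordProd_eq fun _ hp ↦ hp.1, fun h ↦ ?_⟩⟩
  have hparallel : 1 * wordProd f u = 1 * wordProd f v := by rw [one_mul, one_mul, h]
  exact (hqsc 1 u v hparallel).reflTransGen_oneStep_shortRelations hcancel

/-- Let `M` be a left cancellative monoid generated by a finite set `A` (via `f : A → M`),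
and suppose the right Cayley graph is `n`-quasi-simply-connected. Then the set `R` of all
relations `u = v` over `A` holding in `M` with `|u| + |v| ≤ n` is finite, and `⟨A | R⟩` is
a presentation of `M`; in particular `M` is finitely presented. -/
theorem stmt_7 {A M : Type} [Fintype A] [Monoid M]
    (hcancel : ∀ x a b : M, x * a = x * b → a = b)
    (f : A → M) (hgen : Function.Surjective (wordProd f))
    (n : ℕ) (hqsc : NQSC f n) :
    {p : List A × List A | wordProd f p.1 = wordProd f p.2 ∧
        p.1.length + p.2.length ≤ n}.Finite ∧
    Presents f {p : List A × List A | wordProd f p.1 = wordProd f p.2 ∧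
        p.1.length + p.2.length ≤ n} :=
  ⟨finite_shortRelations f n, presents_shortRelations_of_nqsc hcancel hgen hqsc⟩
end

section
/- The property of being quasi-simply-connected is inherited by strongly connected components: if Γ is an n-quasi-simply-connected directed graph and Δ is a strongly connected component of Γ, then Δ is n-quasi-simply-connected. -/
/-- A (directed) path in the directed graph with adjacency relation `adj`, recorded as its
nonempty list of vertices, consecutive ones being adjacent. -/
def IsDipath {V : Type*} (adj : V → V → Prop) (p : List V) : Prop :=
  p ≠ [] ∧ p.Chain' adj

/-- An atomic homotopy in the directed 2-complex `K_n(Γ)`: replace an occurrence of a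
directed subpath `s` by a parallel directed subpath `t` (same first and last vertex),
where the total number of edges `(|s| - 1) + (|t| - 1)` of the 2-cell `(s, t)` is at
most `n`, the result again being a directed path. -/
def GStep {V : Type*} (adj : V → V → Prop) (n : ℕ) (p q : List V) : Prop :=
  ∃ u s t v : List V, p = u ++ s ++ v ∧ q = u ++ t ++ v ∧
    IsDipath adj s ∧ IsDipath adj t ∧
    s.head? = t.head? ∧ s.getLast? = t.getLast? ∧
    (s.length - 1) + (t.length - 1) ≤ n ∧
    IsDipath adj p ∧ IsDipath adj q

/-- A directed graph is `n`-quasi-simply-connected if every pair of parallel directed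
paths (same start vertex and same end vertex) is homotopic in `K_n`, i.e. connected by a
finite sequence of 2-cell replacements. -/
def GraphNQSC {V : Type*} (adj : V → V → Prop) (n : ℕ) : Prop :=
  ∀ p q : List V, IsDipath adj p → IsDipath adj q →
    p.head? = q.head? → p.getLast? = q.getLast? →
    Relation.ReflTransGen (GStep adj n) p q

/-- The strongly connected component of the vertex `w`: all vertices with directed paths
to and from `w`. -/
def SCC {V : Type*} (adj : V → V → Prop) (w : V) : Set V :=
  {v | Relation.ReflTransGen adj v w ∧ Relation.ReflTransGen adj w v}

/-!
A strongly connected component is path-convex: every vertex on a directed path between two of its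
vertices belongs to it. A 2-cell replacement swaps a subpath for a parallel one, whose vertices lie
on a directed path between two vertices of the old path; so a homotopy in `K_n(Γ)` starting from a
path of `Δ` never leaves `Δ`, and is a homotopy in `K_n(Δ)`.
-/

open Relation

section

variable {V W : Type*} {adj : V → V → Prop} {n : ℕ}

def IsPathConvex (adj : V → V → Prop) (S : Set V) : Prop :=
  ∀ ⦃x y z : V⦄, x ∈ S → z ∈ S → ReflTransGen adj x y → ReflTransGen adj y z → y ∈ S

theorem isPathConvex_SCC (adj : V → V → Prop) (w : V) : IsPathConvex adj (SCC adj w) :=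
  fun _ _ _ hx hz hxy hyz => ⟨hyz.trans hz.1, hx.2.trans hxy⟩

theorem isDipath_map_iff (f : W → V) {p : List W} :
    IsDipath adj (p.map f) ↔ IsDipath (fun a b => adj (f a) (f b)) p :=
  and_congr List.map_eq_nil_iff.not (List.isChain_map f)

namespace IsDipath

theorem reflTransGen_head {p : List V} (hp : IsDipath adj p) {y : V} (hy : y ∈ p) :
    ReflTransGen adj (p.head hp.1) y :=
  hp.2.induction _ p (fun _ _ hxy hx => hx.tail hxy) (fun _ => .refl) y hy

theorem reflTransGen_getLast {p : List V} (hp : IsDipath adj p) {y : V} (hy : y ∈ p) :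
    ReflTransGen adj y (p.getLast hp.1) :=
  hp.2.backwards_induction (ReflTransGen adj · (p.getLast hp.1)) p
    (fun _ _ hxy hyl => hyl.head hxy) (fun _ => .refl) y hy

theorem subset_of_isPathConvex {S : Set V} (hS : IsPathConvex adj S) {p : List V}
    (hp : IsDipath adj p) (hhead : p.head hp.1 ∈ S) (hlast : p.getLast hp.1 ∈ S) :
    ∀ y ∈ p, y ∈ S :=
  fun _ hy => hS hhead hlast (hp.reflTransGen_head hy) (hp.reflTransGen_getLast hy)

end IsDipath

theorem List.map_eq_append_append_iff {f : W → V} {l : List W} {u s v : List V} :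
    l.map f = u ++ s ++ v ↔ ∃ u' s' v', l = u' ++ s' ++ v' ∧
      u'.map f = u ∧ s'.map f = s ∧ v'.map f = v := by
  simp only [List.append_assoc, List.map_eq_append_iff]
  constructor
  · rintro ⟨u', sv', rfl, rfl, s', v', rfl, rfl, rfl⟩
    exact ⟨u', s', v', rfl, rfl, rfl, rfl⟩
  · rintro ⟨u', s', v', rfl, rfl, rfl, rfl⟩
    exact ⟨u', s' ++ v', rfl, rfl, s', v', rfl, rfl, rfl⟩

namespace GStep

theorem forall_mem_of_isPathConvex {S : Set V} (hS : IsPathConvex adj S) {p q : List V}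
    (hpq : GStep adj n p q) (hp : ∀ x ∈ p, x ∈ S) : ∀ y ∈ q, y ∈ S := by
  obtain ⟨u, s, t, v, rfl, rfl, hs, ht, hhead, hlast, -⟩ := hpq
  have hsp : ∀ x ∈ s, x ∈ S := fun x hx => hp x (by simp [hx])
  have htS : ∀ y ∈ t, y ∈ S := by
    refine ht.subset_of_isPathConvex hS (hsp _ (List.mem_of_mem_head? ?_))
      (hsp _ (List.mem_of_mem_getLast? ?_))
    · rw [hhead, List.head?_eq_some_head ht.1]; rfl
    · rw [hlast, List.getLast?_eq_some_getLast ht.1]; rfl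
  intro y hy
  simp only [List.mem_append] at hy
  rcases hy with (hy | hy) | hy
  · exact hp y (by simp [hy])
  · exact htS y hy
  · exact hp y (by simp [hy])

theorem of_map {f : W → V} (hf : f.Injective) {p q : List W}
    (hpq : GStep adj n (p.map f) (q.map f)) : GStep (fun a b => adj (f a) (f b)) n p q := by
  obtain ⟨u, s, t, v, hp, hq, hs, ht, hhead, hlast, hlen, hpd, hqd⟩ := hpq
  obtain ⟨u', s', v', rfl, rfl, rfl, rfl⟩ := List.map_eq_append_append_iff.1 hp
  obtain ⟨u'', t', v'', rfl, hu, rfl, hv⟩ := List.map_eq_append_append_iff.1 hq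
  obtain rfl := List.map_injective_iff.2 hf hu
  obtain rfl := List.map_injective_iff.2 hf hv
  simp only [List.head?_map, List.getLast?_map, List.length_map] at hhead hlast hlen
  exact ⟨u'', s', t', v'', rfl, rfl, (isDipath_map_iff f).1 hs, (isDipath_map_iff f).1 ht,
    Option.map_injective hf hhead, Option.map_injective hf hlast, hlen,
    (isDipath_map_iff f).1 hpd, (isDipath_map_iff f).1 hqd⟩

end GStep

theorem exists_reflTransGen_gStep_induce {S : Set V} (hS : IsPathConvex adj S) {p : List S}
    {Q : List V} (h : ReflTransGen (GStep adj n) (p.map (↑)) Q) :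
    ∃ q : List S, q.map (↑) = Q ∧ ReflTransGen (GStep (fun a b : S => adj a b) n) p q := by
  induction h with
  | refl => exact ⟨p, rfl, .refl⟩
  | @tail _ c _ hstep ih =>
    obtain ⟨q, rfl, hpq⟩ := ih
    lift c to List S using hstep.forall_mem_of_isPathConvex hS (by simp +contextual) with r
    exact ⟨r, rfl, hpq.tail (GStep.of_map Subtype.val_injective hstep)⟩

theorem GraphNQSC.induce_of_isPathConvex (h : GraphNQSC adj n) {S : Set V}
    (hS : IsPathConvex adj S) : GraphNQSC (fun a b : S => adj a b) n := by
  intro p q hp hq hhead hlast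
  obtain ⟨q', hq', hpq'⟩ := exists_reflTransGen_gStep_induce hS <|
    h _ (q.map (↑)) ((isDipath_map_iff _).2 hp) ((isDipath_map_iff _).2 hq)
      (by simp only [List.head?_map, hhead]) (by simp only [List.getLast?_map, hlast])
  rwa [List.map_injective_iff.2 Subtype.val_injective hq'] at hpq'

end

/-- Quasi-simple-connectedness is inherited by strongly connected components: if `Γ` is an
`n`-quasi-simply-connected directed graph and `Δ` is (the induced subgraph on) a strongly
connected component of `Γ`, then `Δ` is `n`-quasi-simply-connected. -/
theorem stmt_9 {V : Type*} (adj : V → V → Prop) (n : ℕ) (h : GraphNQSC adj n) (w : V) :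
    GraphNQSC (fun a b : SCC adj w => adj a b) n :=
  h.induce_of_isPathConvex (isPathConvex_SCC adj w)
end

section
/- Let S be a monoid and H an H-class of S. Let Stab(H) = {s ∈ S : sH = H} be the left stabilizer of H, and define σ on Stab(H) by (x,y) ∈ σ iff xh = yh for all h ∈ H. Then Stab(H) is a submonoid of S, σ is a congruence on Stab(H), and the quotient Stab(H)/σ is a group. -/
/-!
Left multiplication by `s ∈ Stab(H)` is a bijection of `H`, and `Stab(H)` is closed under
composition of such bijections. For an inverse of `x ∈ Stab(H)`, pick `q` with `q (x h₀) = h₀`,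
which exists since `x h₀ L h₀`. Every `h ∈ H` has the form `h₀ u` because `h R h₀`, so
`q x h = q x h₀ u = h₀ u = h`: left multiplication by `q` inverts that by `x` on `H`.
Hence `q ∈ Stab(H)` and `q x σ 1 σ x q`.
-/


/-- Green's relation `L` on a semigroup: `a L b` iff `a = b` or there are `c, d` with
`a = c * b` and `b = d * a`. -/
def GreenL {S : Type*} [Semigroup S] (a b : S) : Prop :=
  a = b ∨ ∃ c d : S, a = c * b ∧ b = d * a

/-- Green's relation `R` on a semigroup: `a R b` iff `a = b` or there are `c, d` with
`a = b * c` and `b = a * d`. -/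
def GreenR {S : Type*} [Semigroup S] (a b : S) : Prop :=
  a = b ∨ ∃ c d : S, a = b * c ∧ b = a * d

/-- Green's relation `H = L ∩ R`. -/
def GreenH {S : Type*} [Semigroup S] (a b : S) : Prop :=
  GreenL a b ∧ GreenR a b

/-- The `H`-class of the element `h₀`. -/
def HClass {S : Type*} [Monoid S] (h₀ : S) : Set S := {x | GreenH x h₀}

/-- The left stabilizer `Stab(H) = {s : sH = H}` of the `H`-class of `h₀`. -/
def LStab {S : Type*} [Monoid S] (h₀ : S) : Set S :=
  {s | (fun h => s * h) '' HClass h₀ = HClass h₀}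

/-- The Schützenberger congruence `σ` on `Stab(H)`: `x σ y` iff `x h = y h` for all
`h ∈ H`. -/
def SchutzRel {S : Type*} [Monoid S] (h₀ : S) (x y : S) : Prop :=
  ∀ h ∈ HClass h₀, x * h = y * h

open Set

section

variable {S : Type*} [Monoid S] {h₀ : S}

lemma mem_HClass_self (h₀ : S) : h₀ ∈ HClass h₀ :=
  ⟨Or.inl rfl, Or.inl rfl⟩

lemma exists_eq_mul_of_mem_HClass {h : S} (hh : h ∈ HClass h₀) : ∃ u, h = h₀ * u := by
  rcases hh.2 with rfl | ⟨c, -, hc, -⟩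
  · exact ⟨1, (mul_one h).symm⟩
  · exact ⟨c, hc⟩

lemma exists_mul_eq_of_mem_HClass {h : S} (hh : h ∈ HClass h₀) : ∃ d, d * h = h₀ := by
  rcases hh.1 with rfl | ⟨-, d, -, hd⟩
  · exact ⟨1, one_mul h⟩
  · exact ⟨d, hd.symm⟩

lemma mem_LStab_iff {s : S} :
    s ∈ LStab h₀ ↔ MapsTo (s * ·) (HClass h₀) (HClass h₀) ∧
      SurjOn (s * ·) (HClass h₀) (HClass h₀) := by
  rw [mapsTo_iff_image_subset, SurjOn, ← Subset.antisymm_iff]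
  rfl

lemma one_mem_LStab : (1 : S) ∈ LStab h₀ := by
  simp [LStab]

lemma mul_mem_LStab {x y : S} (hx : x ∈ LStab h₀) (hy : y ∈ LStab h₀) : x * y ∈ LStab h₀ := by
  rw [mem_LStab_iff] at *
  have hcomp : (x * y * ·) = (x * ·) ∘ (y * ·) := funext fun h => mul_assoc x y h
  rw [hcomp]
  exact ⟨hx.1.comp hy.1, hx.2.comp hy.2⟩

lemma SchutzRel.mul {x x' y y' : S} (hy' : y' ∈ LStab h₀) (hxx' : SchutzRel h₀ x x')
    (hyy' : SchutzRel h₀ y y') : SchutzRel h₀ (x * y) (x' * y') := fun h hh => by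
  rw [mul_assoc, hyy' h hh, hxx' _ ((mem_LStab_iff.1 hy').1 hh), mul_assoc]

lemma mul_eq_self_of_mul_self_eq {a : S} (ha : a * h₀ = h₀) {h : S} (hh : h ∈ HClass h₀) :
    a * h = h := by
  obtain ⟨u, rfl⟩ := exists_eq_mul_of_mem_HClass hh
  rw [← mul_assoc, ha]

lemma exists_invOn_of_mem_LStab {x : S} (hx : x ∈ LStab h₀) :
    ∃ q ∈ LStab h₀, InvOn (q * ·) (x * ·) (HClass h₀) (HClass h₀) := by
  obtain ⟨hmaps, hsurj⟩ := mem_LStab_iff.1 hx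
  obtain ⟨q, hq⟩ := exists_mul_eq_of_mem_HClass (hmaps (mem_HClass_self h₀))
  have hleft : LeftInvOn (q * ·) (x * ·) (HClass h₀) := fun h hh => by
    simp only [← mul_assoc] at hq ⊢
    exact mul_eq_self_of_mul_self_eq hq hh
  have hright : RightInvOn (q * ·) (x * ·) (HClass h₀) := fun h hh => by
    obtain ⟨h', hh', rfl⟩ := hsurj hh
    simp only [hleft hh']
  exact ⟨q, mem_LStab_iff.2 ⟨hleft.mapsTo hsurj, hleft.surjOn hmaps⟩, hleft, hright⟩

end

/-- Let `H` be an `H`-class of a monoid `S`. Then the left stabilizer `Stab(H)` is a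
submonoid of `S`; `σ` is a congruence on `Stab(H)` (an equivalence relation compatible with
multiplication); and the quotient `Stab(H)/σ` is a group: the class of `1` is an identity
and every class has an inverse. -/
theorem stmt_11 {S : Type*} [Monoid S] (h₀ : S) :
    (1 ∈ LStab h₀) ∧
    (∀ x ∈ LStab h₀, ∀ y ∈ LStab h₀, x * y ∈ LStab h₀) ∧
    (∀ x : S, SchutzRel h₀ x x) ∧
    (∀ x y : S, SchutzRel h₀ x y → SchutzRel h₀ y x) ∧
    (∀ x y z : S, SchutzRel h₀ x y → SchutzRel h₀ y z → SchutzRel h₀ x z) ∧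
    (∀ x ∈ LStab h₀, ∀ x' ∈ LStab h₀, ∀ y ∈ LStab h₀, ∀ y' ∈ LStab h₀,
      SchutzRel h₀ x x' → SchutzRel h₀ y y' → SchutzRel h₀ (x * y) (x' * y')) ∧
    (∀ x ∈ LStab h₀, ∃ y ∈ LStab h₀, SchutzRel h₀ (x * y) 1 ∧ SchutzRel h₀ (y * x) 1) := by
  refine ⟨one_mem_LStab, fun x hx y hy => mul_mem_LStab hx hy, fun x h _ => rfl,
    fun x y hxy h hh => (hxy h hh).symm,
    fun x y z hxy hyz h hh => (hxy h hh).trans (hyz h hh),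
    fun x _ x' _ y _ y' hy' hxx' hyy' => hxx'.mul hy' hyy', fun x hx => ?_⟩
  obtain ⟨q, hq, hleft, hright⟩ := exists_invOn_of_mem_LStab hx
  refine ⟨q, hq, fun h hh => ?_, fun h hh => ?_⟩
  · rw [mul_assoc, one_mul]
    exact hright hh
  · rw [mul_assoc, one_mul]
    exact hleft hh
end

section
/- Let X ⊆ ℕ and let M(X) be the monoid presented by ⟨a,b,c,d,e | a bⁱ c = a bⁱ d (i ∈ X), a bʲ c = a bʲ e (j ∉ X)⟩. Then the rewriting system with rules a bⁱ c → a bⁱ d for i ∈ X and a bʲ c → a bʲ e for j ∉ X is terminating and confluent, and the set N = A* \ ⋃_{i∈ℕ} A* a bⁱ c A* (words over A = {a,b,c,d,e} containing no factor a bⁱ c) is a set of unique normal forms for the elements of M(X). -/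
/-! The monoids `M(X)`. The alphabet `{a, b, c, d, e}` is modelled by `Fin 5`, with
`a = 0`, `b = 1`, `c = 2`, `d = 3`, `e = 4`. -/

/-- The word `a bⁱ c`. -/
def wABC (i : ℕ) : List (Fin 5) := 0 :: (List.replicate i 1 ++ [2])

/-- The word `a bⁱ d`. -/
def wABD (i : ℕ) : List (Fin 5) := 0 :: (List.replicate i 1 ++ [3])

/-- The word `a bⁱ e`. -/
def wABE (i : ℕ) : List (Fin 5) := 0 :: (List.replicate i 1 ++ [4])

/-- The defining relations of `M(X)`:
`a bⁱ c = a bⁱ d` for `i ∈ X` and `a bʲ c = a bʲ e` for `j ∉ X`. -/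
def MXRel (X : Set ℕ) : Set (List (Fin 5) × List (Fin 5)) :=
  {p | ∃ i : ℕ, (i ∈ X ∧ p = (wABC i, wABD i)) ∨ (i ∉ X ∧ p = (wABC i, wABE i))}

/-- One step of the rewriting system for `M(X)`:
`a bⁱ c → a bⁱ d` for `i ∈ X`, and `a bʲ c → a bʲ e` for `j ∉ X`. -/
def RWStep (X : Set ℕ) (w w' : List (Fin 5)) : Prop :=
  ∃ (u v : List (Fin 5)) (i : ℕ),
    (i ∈ X ∧ w = u ++ wABC i ++ v ∧ w' = u ++ wABD i ++ v) ∨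
    (i ∉ X ∧ w = u ++ wABC i ++ v ∧ w' = u ++ wABE i ++ v)

/-- The normal forms: words over `{a,b,c,d,e}` containing no factor `a bⁱ c`. -/
def MXNormal (w : List (Fin 5)) : Prop :=
  ¬∃ (u v : List (Fin 5)) (i : ℕ), w = u ++ wABC i ++ v

/-!
Scanning a word from left to right while remembering whether the letters read so far end in
`a bⁱ` (and for which `i`), one can replace in a single pass every `c` that completes a factor
`a bⁱ c` by `d` or `e` according as `i ∈ X`. This normalizing map is constant along rewriting
steps and fixes the words without a factor `a bⁱ c`; since rewriting strictly decreases the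
number of `c`'s, every word rewrites to such a word, which is therefore its image under the
normalizing map. Confluence and uniqueness of normal forms follow.
-/

namespace Relation

variable {α : Type*} {r : α → α → Prop}

theorem exists_reflTransGen_irreducible (hr : WellFounded (flip r)) (a : α) :
    ∃ b, ReflTransGen r a b ∧ ∀ c, ¬r b c := by
  obtain ⟨b, hab, hmin⟩ := hr.has_min {b | ReflTransGen r a b} ⟨a, .refl⟩
  exact ⟨b, hab, fun c hbc => hmin c (hab.tail hbc) hbc⟩

theorem EqvGen.apply_eq {β : Sort*} {f : α → β} (hf : ∀ a b, r a b → f a = f b) {a b : α}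
    (h : EqvGen r a b) : f a = f b :=
  congrArg (Quot.lift f hf) (Quot.eqvGen_sound h)

section Normalizer

variable {f : α → α}

theorem reflTransGen_apply_of_invariant (hr : WellFounded (flip r))
    (hf : ∀ a b, r a b → f a = f b) (hfix : ∀ a, (∀ b, ¬r a b) → f a = a) (a : α) :
    ReflTransGen r a (f a) ∧ ∀ b, ¬r (f a) b := by
  obtain ⟨b, hab, hb⟩ := exists_reflTransGen_irreducible hr a
  have hfa : f a = b :=
    (EqvGen.apply_eq hf (EqvGen.reflTransGen_le_eqvGen r _ _ hab)).trans (hfix b hb)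
  exact hfa ▸ ⟨hab, hb⟩

theorem join_of_invariant (hr : WellFounded (flip r))
    (hf : ∀ a b, r a b → f a = f b) (hfix : ∀ a, (∀ b, ¬r a b) → f a = a) {a b c : α}
    (hab : ReflTransGen r a b) (hac : ReflTransGen r a c) : Join (ReflTransGen r) b c := by
  have hfbc : f b = f c :=
    EqvGen.apply_eq hf (.trans _ _ _ (.symm _ _ (EqvGen.reflTransGen_le_eqvGen r _ _ hab))
      (EqvGen.reflTransGen_le_eqvGen r _ _ hac))
  exact ⟨f b, (reflTransGen_apply_of_invariant hr hf hfix b).1,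
    hfbc ▸ (reflTransGen_apply_of_invariant hr hf hfix c).1⟩

theorem existsUnique_irreducible_eqvGen_of_invariant (hr : WellFounded (flip r))
    (hf : ∀ a b, r a b → f a = f b) (hfix : ∀ a, (∀ b, ¬r a b) → f a = a) (a : α) :
    ∃! b, (∀ c, ¬r b c) ∧ EqvGen r a b := by
  obtain ⟨hred, hirr⟩ := reflTransGen_apply_of_invariant hr hf hfix a
  refine ⟨f a, ⟨hirr, EqvGen.reflTransGen_le_eqvGen r _ _ hred⟩, ?_⟩
  rintro b ⟨hb, hab⟩
  exact (hfix b hb).symm.trans (EqvGen.apply_eq hf hab).symm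

end Normalizer

end Relation

variable {X : Set ℕ} {w w' : List (Fin 5)}

theorem RWStep.count_two_lt (h : RWStep X w w') : w'.count 2 < w.count 2 := by
  obtain ⟨u, v, i, ⟨-, rfl, rfl⟩ | ⟨-, rfl, rfl⟩⟩ := h <;>
    simp [wABC, wABD, wABE, List.count_replicate]

theorem RWStep.wellFounded (X : Set ℕ) : WellFounded (flip (RWStep X)) :=
  Subrelation.wf (fun h => h.count_two_lt) (InvImage.wf (List.count 2) wellFounded_lt)

theorem mxNormal_iff_forall_not_rwStep : MXNormal w ↔ ∀ w', ¬RWStep X w w' := by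
  refine ⟨?_, fun h ⟨u, v, i, hw⟩ => ?_⟩
  · rintro hw w' ⟨u, v, i, ⟨-, rfl, -⟩ | ⟨-, rfl, -⟩⟩ <;> exact hw ⟨u, v, i, rfl⟩
  · by_cases hi : i ∈ X
    · exact h _ ⟨u, v, i, .inl ⟨hi, hw, rfl⟩⟩
    · exact h _ ⟨u, v, i, .inr ⟨hi, hw, rfl⟩⟩

theorem MXNormal.of_suffix (hw : MXNormal w) (h : w' <:+ w) : MXNormal w' := by
  rintro ⟨u, v, i, rfl⟩
  obtain ⟨t, rfl⟩ := h
  exact hw ⟨t ++ u, v, i, by simp⟩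

/-- The state `some i` records that the letters read so far end in `a bⁱ`. -/
def nextState : Option ℕ → Fin 5 → Option ℕ
  | _, 0 => some 0
  | s, 1 => s.map (· + 1)
  | _, _ => none

open Classical in
noncomputable def relabel (X : Set ℕ) (s : Option ℕ) (x : Fin 5) : Fin 5 :=
  match x, s with
  | 2, some i => if i ∈ X then 3 else 4
  | x, _ => x

noncomputable def normalizeFrom (X : Set ℕ) : Option ℕ → List (Fin 5) → List (Fin 5)
  | _, [] => []
  | s, x :: t => relabel X s x :: normalizeFrom X (nextState s x) t

/-- The shortest word that leaves the scan in state `s`. -/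
def stateWord : Option ℕ → List (Fin 5)
  | none => []
  | some i => 0 :: List.replicate i 1

theorem normalizeFrom_append (s : Option ℕ) (u v : List (Fin 5)) :
    normalizeFrom X s (u ++ v) =
      normalizeFrom X s u ++ normalizeFrom X (u.foldl nextState s) v := by
  induction u generalizing s with
  | nil => rfl
  | cons x t ih => simp [normalizeFrom, ih]

theorem normalizeFrom_replicate_append (i k : ℕ) (v : List (Fin 5)) :
    normalizeFrom X (some i) (List.replicate k 1 ++ v) =
      List.replicate k 1 ++ normalizeFrom X (some (i + k)) v := by
  induction k generalizing i with
  | zero => rfl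
  | succ k ih =>
    calc normalizeFrom X (some i) (List.replicate (k + 1) 1 ++ v)
        = 1 :: normalizeFrom X (some (i + 1)) (List.replicate k 1 ++ v) := rfl
      _ = _ := by rw [ih, add_right_comm]; rfl

theorem normalizeFrom_stateWord_append (s : Option ℕ) (i : ℕ) (y : Fin 5) (v : List (Fin 5)) :
    normalizeFrom X s (stateWord (some i) ++ y :: v) =
      stateWord (some i) ++ relabel X (some i) y :: normalizeFrom X (nextState (some i) y) v := by
  change 0 :: normalizeFrom X (some 0) (List.replicate i 1 ++ y :: v) = _
  rw [normalizeFrom_replicate_append, zero_add]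
  rfl

theorem RWStep.normalizeFrom_eq (h : RWStep X w w') :
    normalizeFrom X none w = normalizeFrom X none w' := by
  have hfactor (y : Fin 5) (i : ℕ) (u v : List (Fin 5)) :
      u ++ (0 :: (List.replicate i 1 ++ [y])) ++ v = u ++ (stateWord (some i) ++ y :: v) := by
    simp [stateWord]
  obtain ⟨u, v, i, ⟨hi, rfl, rfl⟩ | ⟨hi, rfl, rfl⟩⟩ := h <;>
    simp only [wABC, wABD, wABE, hfactor, normalizeFrom_append _ u, normalizeFrom_stateWord_append] <;>
    simp [relabel, nextState, hi]

theorem stateWord_nextState_append_suffix (s : Option ℕ) (x : Fin 5) (t : List (Fin 5)) :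
    stateWord (nextState s x) ++ t <:+ stateWord s ++ x :: t := by
  fin_cases x
  · exact ⟨stateWord s, rfl⟩
  · cases s with
    | none => exact ⟨[1], rfl⟩
    | some i => exact ⟨[], by simp [stateWord, nextState, List.replicate_succ']⟩
  all_goals exact (List.suffix_cons _ t).trans (List.suffix_append _ _)

theorem relabel_eq_self {s : Option ℕ} {x : Fin 5} {t : List (Fin 5)}
    (h : MXNormal (stateWord s ++ x :: t)) : relabel X s x = x := by
  rcases s with _ | i
  · fin_cases x <;> rfl
  · fin_cases x <;> try rfl
    exact absurd ⟨[], t, i, by simp [stateWord, wABC]⟩ h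

theorem normalizeFrom_eq_self (s : Option ℕ) (w : List (Fin 5))
    (hw : MXNormal (stateWord s ++ w)) : normalizeFrom X s w = w := by
  induction w generalizing s with
  | nil => rfl
  | cons x t ih =>
    rw [normalizeFrom, relabel_eq_self hw,
      ih _ (hw.of_suffix (stateWord_nextState_append_suffix s x t))]

/-- The rewriting system for `M(X)` is terminating (no infinite rewriting sequences,
i.e. the reverse of one-step rewriting is well-founded) and confluent, and the words with
no factor `a bⁱ c` form a set of unique normal forms for `M(X)`: every congruence class
(class of the equivalence generated by rewriting) contains exactly one normal form. -/
theorem stmt_13 (X : Set ℕ) :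
    WellFounded (fun w' w : List (Fin 5) => RWStep X w w') ∧
    (∀ w p q : List (Fin 5), Relation.ReflTransGen (RWStep X) w p →
      Relation.ReflTransGen (RWStep X) w q →
      ∃ r, Relation.ReflTransGen (RWStep X) p r ∧ Relation.ReflTransGen (RWStep X) q r) ∧
    (∀ w : List (Fin 5), ∃! nf : List (Fin 5),
      MXNormal nf ∧ Relation.EqvGen (RWStep X) w nf) := by
  have hwf := RWStep.wellFounded X
  have hf : ∀ w w', RWStep X w w' → normalizeFrom X none w = normalizeFrom X none w' :=
    fun _ _ h => h.normalizeFrom_eq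
  have hfix : ∀ w, (∀ w', ¬RWStep X w w') → normalizeFrom X none w = w :=
    fun w hw => normalizeFrom_eq_self none w (mxNormal_iff_forall_not_rwStep.2 hw)
  refine ⟨hwf, fun _ _ _ => Relation.join_of_invariant hwf hf hfix, fun w => ?_⟩
  simpa only [mxNormal_iff_forall_not_rwStep (X := X)] using
    Relation.existsUnique_irreducible_eqvGen_of_invariant hwf hf hfix w
end

section
/- For any two subsets X, Y ⊆ ℕ, the right Cayley graphs (as semimetric spaces) of M(X) and M(Y) over the generating set {a,b,c,d,e} are isometric, via the identity map on the common set of normal forms. In particular, there exist finitely generated monoids with isometric Cayley graphs such that one has decidable word problem and the other does not. -/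
open scoped ENNReal

/-- The right Cayley graph semimetric on a monoid with respect to a generating set `S`. -/
noncomputable def cayleyDist {M : Type*} [Monoid M] (S : Set M) (x y : M) : ℝ≥0∞ :=
  sInf {c : ℝ≥0∞ | ∃ w : List M, (∀ s ∈ w, s ∈ S) ∧ x * w.prod = y ∧ c = (w.length : ℝ≥0∞)}


/-! Both monoids have the same normal forms, the words without a factor `a bⁱ c`. Appending a
letter `l` to a normal word `n` yields, in `M(X)`, the normal word `n l'`, where `l' = l` unless
`l = c` completes a factor `a bⁱ c`, in which case `l'` is `d` or `e` according to whether
`i ∈ X`. So the identity on normal forms sends every edge of one Cayley graph to an edge of the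
other, in both directions, and is therefore an isometry. Since `a bⁱ c = a bⁱ d` holds in `M(X)`
exactly when `i ∈ X`, the word problem of `M(X)` decides `X`; taking `X = ∅` and `Y` the halting
set gives the second part. -/

open Relation

section CayleyDist

variable {M N : Type*} [Monoid M] [Monoid N]

def IsCayleyHom (S : Set M) (T : Set N) (φ : M → N) : Prop :=
  ∀ x, ∀ s ∈ S, ∃ t ∈ T, φ (x * s) = φ x * t

theorem IsCayleyHom.exists_path {S : Set M} {T : Set N} {φ : M → N} (hφ : IsCayleyHom S T φ) :
    ∀ (w : List M), (∀ s ∈ w, s ∈ S) → ∀ x, ∃ w' : List N,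
      (∀ t ∈ w', t ∈ T) ∧ φ (x * w.prod) = φ x * w'.prod ∧ w'.length = w.length
  | [], _, x => ⟨[], by simp⟩
  | s :: w, hw, x => by
    obtain ⟨t, ht, hxt⟩ := hφ x s (hw s List.mem_cons_self)
    obtain ⟨w', hw', hprod, hlen⟩ :=
      hφ.exists_path w (fun s hs => hw s (List.mem_cons_of_mem _ hs)) (x * s)
    refine ⟨t :: w', List.forall_mem_cons.2 ⟨ht, hw'⟩, ?_, by simp [hlen]⟩
    rw [List.prod_cons, ← mul_assoc, hprod, hxt, List.prod_cons, mul_assoc]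

theorem IsCayleyHom.cayleyDist_le {S : Set M} {T : Set N} {φ : M → N}
    (hφ : IsCayleyHom S T φ) (x y : M) : cayleyDist T (φ x) (φ y) ≤ cayleyDist S x y := by
  refine le_sInf ?_
  rintro _ ⟨w, hw, rfl, rfl⟩
  obtain ⟨w', hw', hprod, hlen⟩ := hφ.exists_path w hw x
  exact sInf_le ⟨w', hw', hprod.symm, by rw [hlen]⟩

theorem cayleyDist_eq_of_isCayleyHom {S : Set M} {T : Set N} (φ : M ≃ N)
    (hφ : IsCayleyHom S T φ) (hψ : IsCayleyHom T S φ.symm) (x y : M) :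
    cayleyDist S x y = cayleyDist T (φ x) (φ y) :=
  le_antisymm (by simpa using hψ.cayleyDist_le (φ x) (φ y)) (hφ.cayleyDist_le x y)

end CayleyDist

section Rewriting

variable {A : Type*} {R : Set (List A × List A)}

theorem OneStep.symm {w w' : List A} (h : OneStep R w w') : OneStep R w' w := by
  obtain ⟨u, s, t, v, hst, rfl, rfl⟩ := h
  exact ⟨u, t, s, v, hst.symm, rfl, rfl⟩

instance : Std.Symm (OneStep R) := ⟨fun _ _ => OneStep.symm⟩

theorem OneStep.append {w w' : List A} (h : OneStep R w w') (u v : List A) :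
    OneStep R (u ++ w ++ v) (u ++ w' ++ v) := by
  obtain ⟨u₀, s, t, v₀, hst, rfl, rfl⟩ := h
  exact ⟨u ++ u₀, s, t, v₀ ++ v, hst, by simp, by simp⟩

theorem reflTransGen_oneStep_append {u u' v v' : List A} (hu : ReflTransGen (OneStep R) u u')
    (hv : ReflTransGen (OneStep R) v v') : ReflTransGen (OneStep R) (u ++ v) (u' ++ v') :=
  (hu.lift (· ++ v) fun _ _ h => by simpa using h.append [] v).trans
    (hv.lift (u' ++ ·) fun _ _ h => by simpa using h.append u' [])

variable (R) in
def rewriteCon : Con (FreeMonoid A) where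
  r u v := ReflTransGen (OneStep R) u.toList v.toList
  iseqv := ⟨fun _ => .refl, fun h => ReflTransGen.stdSymm.symm _ _ h, .trans⟩
  mul' := reflTransGen_oneStep_append

theorem wordProd_rewriteCon (w : List A) :
    wordProd (fun a => ((FreeMonoid.of a : FreeMonoid A) : (rewriteCon R).Quotient)) w =
      (FreeMonoid.ofList w : FreeMonoid A) := by
  induction w with
  | nil => rfl
  | cons a w ih => simp only [wordProd, List.map_cons, List.prod_cons] at ih ⊢; rw [ih]; rfl

theorem presents_rewriteCon (R : Set (List A × List A)) :
    Presents (fun a => ((FreeMonoid.of a : FreeMonoid A) : (rewriteCon R).Quotient)) R := by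
  refine ⟨fun m => ?_, fun u v => ?_⟩
  · induction m using Con.induction_on with
    | H w => exact ⟨w.toList, wordProd_rewriteCon _⟩
  · rw [wordProd_rewriteCon, wordProd_rewriteCon, Con.eq]
    rfl

end Rewriting

section Computability

theorem ComputablePred.comp {α β : Type*} [Primcodable α] [Primcodable β] {p : β → Prop}
    {g : α → β} (hp : ComputablePred p) (hg : Computable g) :
    ComputablePred fun a => p (g a) := by
  obtain ⟨_, hp⟩ := hp
  exact ⟨inferInstance, hp.comp hg⟩

def haltingSet : Set ℕ :=
  {n | (Nat.Partrec.Code.eval (Denumerable.ofNat Nat.Partrec.Code n) 0).Dom}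

theorem not_computablePred_mem_haltingSet : ¬ComputablePred (· ∈ haltingSet) := fun h =>
  ComputablePred.halting_problem 0 ((h.comp Computable.encode).of_eq fun c => by
    simp [haltingSet])

theorem primrecPred_mem_empty : PrimrecPred (· ∈ (∅ : Set ℕ)) :=
  ⟨inferInstance, (Primrec.const false).of_eq fun _ => by simp⟩

end Computability

namespace MX

theorem wABC_eq (i : ℕ) : wABC i = (0 :: List.replicate i 1) ++ [2] := by simp [wABC]

theorem two_not_mem_wABD (i : ℕ) : (2 : Fin 5) ∉ wABD i := by simp [wABD]

theorem two_not_mem_wABE (i : ℕ) : (2 : Fin 5) ∉ wABE i := by simp [wABE]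

def pendingStep (s : Option ℕ) (l : Fin 5) : Option ℕ :=
  if l = 0 then some 0 else if l = 1 then s.map (· + 1) else none

/-- `some i` if `w` ends with `a bⁱ`, `none` otherwise. -/
def pending (w : List (Fin 5)) : Option ℕ := w.foldl pendingStep none

theorem pending_concat (w : List (Fin 5)) (l : Fin 5) :
    pending (w ++ [l]) = pendingStep (pending w) l :=
  List.foldl_concat ..

theorem pending_append_replicate {w : List (Fin 5)} {j : ℕ} (h : pending w = some j) (i : ℕ) :
    pending (w ++ List.replicate i 1) = some (j + i) := by
  induction i with
  | zero => simpa using h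
  | succ i ih =>
    rw [List.replicate_succ', ← List.append_assoc, pending_concat, ih]
    simp [pendingStep, add_assoc]

theorem pending_eq_some_iff {w : List (Fin 5)} {i : ℕ} :
    pending w = some i ↔ ∃ u, w = u ++ 0 :: List.replicate i 1 := by
  refine ⟨fun h => ?_, ?_⟩
  · induction w using List.reverseRecOn generalizing i with
    | nil => simp [pending] at h
    | append_singleton w l ih =>
      rw [pending_concat] at h
      fin_cases l
      · obtain rfl : 0 = i := by simpa [pendingStep] using h
        exact ⟨w, by simp⟩
      · obtain ⟨j, hj, rfl⟩ : ∃ j, pending w = some j ∧ j + 1 = i := by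
          simpa [pendingStep] using h
        obtain ⟨u, rfl⟩ := ih hj
        exact ⟨u, by simp [List.replicate_succ']⟩
      all_goals simp [pendingStep] at h
  · rintro ⟨u, rfl⟩
    have h0 : pending (u ++ [0]) = some 0 := by simp [pending_concat, pendingStep]
    simpa using pending_append_replicate h0 i

theorem mxNormal_nil : MXNormal [] := by
  rintro ⟨u, v, i, h⟩
  simpa [wABC] using congrArg List.length h

theorem mxNormal_of_append {w v : List (Fin 5)} (h : MXNormal (w ++ v)) : MXNormal w := by
  rintro ⟨u, v', i, rfl⟩
  exact h ⟨u, v' ++ v, i, by simp⟩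

theorem mxNormal_concat_iff {w : List (Fin 5)} {l : Fin 5} :
    MXNormal (w ++ [l]) ↔ MXNormal w ∧ (l = 2 → pending w = none) := by
  refine ⟨fun h => ⟨mxNormal_of_append h, ?_⟩, ?_⟩
  · rintro rfl
    cases hw : pending w with
    | none => rfl
    | some i =>
      obtain ⟨u, rfl⟩ := pending_eq_some_iff.1 hw
      exact absurd ⟨u, [], i, by simp [wABC_eq]⟩ h
  · rintro ⟨hw, hl⟩ ⟨u, v, i, h⟩
    rcases List.eq_nil_or_concat v with rfl | ⟨v', x, rfl⟩
    · rw [List.append_nil, wABC_eq, ← List.append_assoc] at h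
      obtain ⟨rfl, rfl⟩ := List.append_inj' h rfl |>.imp_right List.singleton_inj.1
      simp [pending_eq_some_iff.2 ⟨u, rfl⟩] at hl
    · rw [List.concat_eq_append, ← List.append_assoc] at h
      exact hw ⟨u, v', i, (List.append_inj' h rfl).1⟩

section NormalForm

variable (X : Set ℕ) [DecidablePred (· ∈ X)]

/-- The letter appended to a normal word with pending state `s` when `l` is multiplied on the
right in `M(X)`: a `c` completing a factor `a bⁱ c` becomes `d` or `e`. -/
def fixLetter (s : Option ℕ) (l : Fin 5) : Fin 5 :=
  if l = 2 then s.elim 2 (fun i => if i ∈ X then 3 else 4) else l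

def normalForm (w : List (Fin 5)) : List (Fin 5) :=
  w.foldl (fun n l => n ++ [fixLetter X (pending n) l]) []

variable {X}

theorem fixLetter_eq_self {s : Option ℕ} {l : Fin 5} (h : l = 2 → s = none) :
    fixLetter X s l = l := by
  by_cases hl : l = 2
  · simp [fixLetter, hl, h hl]
  · simp [fixLetter, hl]

theorem fixLetter_some_two (i : ℕ) : fixLetter X (some i) 2 = if i ∈ X then 3 else 4 := rfl

theorem eq_none_of_fixLetter_eq_two {s : Option ℕ} {l : Fin 5} (h : fixLetter X s l = 2) :
    s = none := by
  unfold fixLetter at h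
  split_ifs at h with hl
  · cases s with
    | none => rfl
    | some i => by_cases hi : i ∈ X <;> simp [hi] at h
  · exact absurd h hl

theorem normalForm_concat (w : List (Fin 5)) (l : Fin 5) :
    normalForm X (w ++ [l]) = normalForm X w ++ [fixLetter X (pending (normalForm X w)) l] :=
  List.foldl_concat ..

theorem normalForm_append_congr {u u' : List (Fin 5)} (h : normalForm X u = normalForm X u')
    (v : List (Fin 5)) : normalForm X (u ++ v) = normalForm X (u' ++ v) := by
  unfold normalForm at h ⊢
  rw [List.foldl_append, List.foldl_append, h]

theorem normalForm_append_of_two_not_mem (u : List (Fin 5)) {v : List (Fin 5)}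
    (hv : (2 : Fin 5) ∉ v) : normalForm X (u ++ v) = normalForm X u ++ v := by
  induction v using List.reverseRecOn with
  | nil => simp
  | append_singleton v l ih =>
    have hl : l ≠ 2 := fun h => hv (by simp [h])
    rw [← List.append_assoc, normalForm_concat, ih (fun h => hv (by simp [h])),
      fixLetter_eq_self (absurd · hl), List.append_assoc]

theorem normalForm_append_wABC (u : List (Fin 5)) (i : ℕ) :
    normalForm X (u ++ wABC i) = normalForm X u ++ if i ∈ X then wABD i else wABE i := by
  rw [wABC_eq, ← List.append_assoc, normalForm_concat,
    normalForm_append_of_two_not_mem _ (by simp), pending_eq_some_iff.2 ⟨_, rfl⟩,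
    fixLetter_some_two]
  split_ifs <;> simp [wABD, wABE]

theorem normalForm_eq_of_oneStep {w w' : List (Fin 5)} (h : OneStep (MXRel X) w w') :
    normalForm X w = normalForm X w' := by
  have key : ∀ u s t, (s, t) ∈ MXRel X → normalForm X (u ++ s) = normalForm X (u ++ t) := by
    rintro u s t ⟨i, ⟨hi, he⟩ | ⟨hi, he⟩⟩ <;> obtain ⟨rfl, rfl⟩ := Prod.mk.inj he
    · rw [normalForm_append_wABC, if_pos hi,
        normalForm_append_of_two_not_mem _ (two_not_mem_wABD i)]
    · rw [normalForm_append_wABC, if_neg hi,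
        normalForm_append_of_two_not_mem _ (two_not_mem_wABE i)]
  obtain ⟨u, s, t, v, hst | hts, rfl, rfl⟩ := h
  · exact normalForm_append_congr (key u s t hst) v
  · exact normalForm_append_congr (key u t s hts).symm v

theorem normalForm_eq_of_reflTransGen {w w' : List (Fin 5)}
    (h : ReflTransGen (OneStep (MXRel X)) w w') : normalForm X w = normalForm X w' := by
  induction h with
  | refl => rfl
  | tail _ hstep ih => exact ih.trans (normalForm_eq_of_oneStep hstep)

theorem mxNormal_normalForm (w : List (Fin 5)) : MXNormal (normalForm X w) := by
  induction w using List.reverseRecOn with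
  | nil => exact mxNormal_nil
  | append_singleton w l ih =>
    rw [normalForm_concat]
    exact mxNormal_concat_iff.2 ⟨ih, eq_none_of_fixLetter_eq_two⟩

theorem normalForm_of_mxNormal {w : List (Fin 5)} (hw : MXNormal w) : normalForm X w = w := by
  induction w using List.reverseRecOn with
  | nil => rfl
  | append_singleton w l ih =>
    obtain ⟨hw, hl⟩ := mxNormal_concat_iff.1 hw
    rw [normalForm_concat, ih hw, fixLetter_eq_self hl]

theorem oneStep_wABC (u v : List (Fin 5)) (i : ℕ) :
    OneStep (MXRel X) (u ++ wABC i ++ v) (u ++ (if i ∈ X then wABD i else wABE i) ++ v) := by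
  refine ⟨u, wABC i, _, v, Or.inl ⟨i, ?_⟩, rfl, rfl⟩
  by_cases hi : i ∈ X
  · exact Or.inl ⟨hi, by rw [if_pos hi]⟩
  · exact Or.inr ⟨hi, by rw [if_neg hi]⟩

theorem reflTransGen_concat_fixLetter (n : List (Fin 5)) (l : Fin 5) :
    ReflTransGen (OneStep (MXRel X)) (n ++ [l]) (n ++ [fixLetter X (pending n) l]) := by
  by_cases h : l = 2 → pending n = none
  · rw [fixLetter_eq_self h]
  push Not at h
  obtain ⟨rfl, hn⟩ := h
  obtain ⟨i, hi⟩ := Option.ne_none_iff_exists'.1 hn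
  obtain ⟨u, rfl⟩ := pending_eq_some_iff.1 hi
  have hstep := oneStep_wABC (X := X) u [] i
  rw [hi, fixLetter_some_two]
  refine ReflTransGen.single ?_
  by_cases hX : i ∈ X <;> simpa [wABC, wABD, wABE, hX] using hstep

theorem reflTransGen_normalForm (w : List (Fin 5)) :
    ReflTransGen (OneStep (MXRel X)) w (normalForm X w) := by
  induction w using List.reverseRecOn with
  | nil => rfl
  | append_singleton w l ih =>
    rw [normalForm_concat]
    exact (reflTransGen_oneStep_append ih .refl).trans (reflTransGen_concat_fixLetter _ l)

end NormalForm

section Presented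

variable {X : Set ℕ} {M : Type*} [Monoid M] {f : Fin 5 → M}

theorem wordProd_concat (w : List (Fin 5)) (l : Fin 5) :
    wordProd f (w ++ [l]) = wordProd f w * f l := by
  simp [wordProd]

theorem wordProd_normalForm [DecidablePred (· ∈ X)] (hf : Presents f (MXRel X))
    (w : List (Fin 5)) : wordProd f (normalForm X w) = wordProd f w :=
  ((hf.2 _ _).1 (reflTransGen_normalForm w)).symm

theorem wordProd_eq_iff [DecidablePred (· ∈ X)] (hf : Presents f (MXRel X))
    {u v : List (Fin 5)} : wordProd f u = wordProd f v ↔ normalForm X u = normalForm X v :=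
  ⟨fun h => normalForm_eq_of_reflTransGen ((hf.2 u v).2 h), fun h => by
    rw [← wordProd_normalForm hf u, h, wordProd_normalForm hf v]⟩

theorem bijective_wordProd_mxNormal (hf : Presents f (MXRel X)) :
    Function.Bijective fun w : {w // MXNormal w} => wordProd f w.1 := by
  classical
  refine ⟨fun ⟨u, hu⟩ ⟨v, hv⟩ h => Subtype.ext ?_, fun m => ?_⟩
  · change u = v
    rw [← normalForm_of_mxNormal (X := X) hu, ← normalForm_of_mxNormal (X := X) hv]
    exact (wordProd_eq_iff hf).1 h
  · obtain ⟨w, rfl⟩ := hf.1 m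
    exact ⟨⟨normalForm X w, mxNormal_normalForm w⟩, wordProd_normalForm hf w⟩

theorem exists_wordProd_mul_eq (hf : Presents f (MXRel X)) {n : List (Fin 5)} (hn : MXNormal n)
    (l : Fin 5) : ∃ l', MXNormal (n ++ [l']) ∧ wordProd f n * f l = wordProd f (n ++ [l']) := by
  classical
  refine ⟨fixLetter X (pending n) l,
    mxNormal_concat_iff.2 ⟨hn, eq_none_of_fixLetter_eq_two⟩, ?_⟩
  rw [← wordProd_concat]
  exact (hf.2 _ _).1 (reflTransGen_concat_fixLetter n l)

noncomputable def normalFormEquiv (hf : Presents f (MXRel X)) : {w // MXNormal w} ≃ M :=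
  .ofBijective _ (bijective_wordProd_mxNormal hf)

variable {Y : Set ℕ} {N : Type*} [Monoid N] {g : Fin 5 → N}

noncomputable def normalFormIso (hf : Presents f (MXRel X)) (hg : Presents g (MXRel Y)) :
    M ≃ N :=
  (normalFormEquiv hf).symm.trans (normalFormEquiv hg)

theorem normalFormIso_wordProd (hf : Presents f (MXRel X)) (hg : Presents g (MXRel Y))
    {w : List (Fin 5)} (hw : MXNormal w) : normalFormIso hf hg (wordProd f w) = wordProd g w := by
  have : (normalFormEquiv hf).symm (wordProd f w) = ⟨w, hw⟩ :=
    (Equiv.symm_apply_eq _).2 rfl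
  rw [normalFormIso, Equiv.trans_apply, this]
  rfl

theorem isCayleyHom_normalFormIso (hf : Presents f (MXRel X)) (hg : Presents g (MXRel Y)) :
    IsCayleyHom (Set.range f) (Set.range g) (normalFormIso hf hg) := by
  rintro x _ ⟨l, rfl⟩
  obtain ⟨⟨n, hn⟩, rfl⟩ := (normalFormEquiv hf).surjective x
  obtain ⟨l', hl', h⟩ := exists_wordProd_mul_eq hf hn l
  refine ⟨g l', ⟨l', rfl⟩, ?_⟩
  change normalFormIso hf hg (wordProd f n * f l) = normalFormIso hf hg (wordProd f n) * g l'
  rw [h, normalFormIso_wordProd hf hg hl', normalFormIso_wordProd hf hg hn, wordProd_concat]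

theorem cayleyDist_normalFormIso (hf : Presents f (MXRel X)) (hg : Presents g (MXRel Y))
    (x y : M) : cayleyDist (Set.range f) x y =
      cayleyDist (Set.range g) (normalFormIso hf hg x) (normalFormIso hf hg y) :=
  cayleyDist_eq_of_isCayleyHom _ (isCayleyHom_normalFormIso hf hg)
    (isCayleyHom_normalFormIso hg hf) x y

end Presented

section WordProblem

variable {X : Set ℕ} {M : Type*} [Monoid M] {f : Fin 5 → M}

theorem primrec_pending : Primrec pending := by
  have hstep : Primrec₂ pendingStep :=
    (Primrec.ite (Primrec.eq.comp Primrec.snd (Primrec.const 0)) (Primrec.const (some 0))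
      (Primrec.ite (Primrec.eq.comp Primrec.snd (Primrec.const 1))
        (Primrec.option_map Primrec.fst (Primrec.succ.comp Primrec.snd).to₂)
        (Primrec.const none))).of_eq fun _ => rfl
  exact Primrec.list_foldl Primrec.id (Primrec.const none)
    (hstep.comp (Primrec.fst.comp Primrec.snd) (Primrec.snd.comp Primrec.snd)).to₂

theorem primrec_normalForm [DecidablePred (· ∈ X)] (hX : Primrec fun i => decide (i ∈ X)) :
    Primrec (normalForm X) := by
  have hfix : Primrec₂ (fixLetter X) := by
    refine (Primrec.ite (Primrec.eq.comp Primrec.snd (Primrec.const 2))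
      (Primrec.option_casesOn Primrec.fst (Primrec.const 2)
        (Primrec.cond (hX.comp Primrec.snd) (Primrec.const 3) (Primrec.const 4)).to₂)
      Primrec.snd).of_eq fun ⟨s, l⟩ => ?_
    by_cases hl : l = 2
    · rcases s with _ | i
      · simp [fixLetter, hl]
      · by_cases hi : i ∈ X <;> simp [fixLetter, hl, hi]
    · simp [fixLetter, hl]
  exact Primrec.list_foldl Primrec.id (Primrec.const [])
    (Primrec.list_concat.comp (Primrec.fst.comp Primrec.snd)
      (hfix.comp (primrec_pending.comp (Primrec.fst.comp Primrec.snd))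
        (Primrec.snd.comp Primrec.snd))).to₂

theorem primrecPred_wordProd_eq (hX : PrimrecPred (· ∈ X)) (hf : Presents f (MXRel X)) :
    PrimrecPred fun p : List (Fin 5) × List (Fin 5) => wordProd f p.1 = wordProd f p.2 := by
  obtain ⟨_, hX⟩ := hX
  exact (Primrec.eq.comp ((primrec_normalForm hX).comp Primrec.fst)
    ((primrec_normalForm hX).comp Primrec.snd)).of_eq fun _ => (wordProd_eq_iff hf).symm

theorem wordProd_wABC_eq_wABD_iff (hf : Presents f (MXRel X)) (i : ℕ) :
    wordProd f (wABC i) = wordProd f (wABD i) ↔ i ∈ X := by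
  classical
  rw [wordProd_eq_iff hf, ← List.nil_append (wABC i), ← List.nil_append (wABD i),
    normalForm_append_wABC, normalForm_append_of_two_not_mem _ (two_not_mem_wABD i)]
  by_cases hi : i ∈ X <;> simp [hi, wABD, wABE]

theorem primrec_wABC_wABD : Primrec fun i => (wABC i, wABD i) := by
  have hrep : Primrec fun i : ℕ => List.replicate i (1 : Fin 5) :=
    (Primrec.list_map Primrec.list_range (Primrec.const 1).to₂).of_eq fun i => by simp
  exact (Primrec.list_cons.comp (Primrec.const 0)
      (Primrec.list_append.comp hrep (Primrec.const [2]))).pair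
    (Primrec.list_cons.comp (Primrec.const 0) (Primrec.list_append.comp hrep (Primrec.const [3])))

theorem computablePred_mem_of_wordProd_eq (hf : Presents f (MXRel X))
    (h : ComputablePred fun p : List (Fin 5) × List (Fin 5) => wordProd f p.1 = wordProd f p.2) :
    ComputablePred (· ∈ X) :=
  (h.comp primrec_wABC_wABD.to_comp).of_eq (wordProd_wABC_eq_wABD_iff hf)

end WordProblem

end MX

/-- For any `X, Y ⊆ ℕ`, the right Cayley graphs of `M(X)` and `M(Y)` over `{a,b,c,d,e}` are
isometric, via the bijection induced by the identity map on the common set of normal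
forms. In particular, there exist finitely generated monoids with isometric Cayley graphs
such that one has decidable word problem and the other does not. -/
theorem stmt_17 (X Y : Set ℕ) {M N : Type} [Monoid M] [Monoid N]
    (f : Fin 5 → M) (g : Fin 5 → N)
    (hf : Presents f (MXRel X)) (hg : Presents g (MXRel Y)) :
    (∃ φ : M ≃ N,
      (∀ w : List (Fin 5), MXNormal w → φ (wordProd f w) = wordProd g w) ∧
      ∀ x y : M, cayleyDist (Set.range f) x y = cayleyDist (Set.range g) (φ x) (φ y)) ∧
    (∃ (M' N' : Type) (iM : Monoid M') (iN : Monoid N')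
        (f' : Fin 5 → M') (g' : Fin 5 → N') (X' Y' : Set ℕ),
      @Presents _ _ iM f' (MXRel X') ∧ @Presents _ _ iN g' (MXRel Y') ∧
      (∃ φ : M' ≃ N', ∀ x y : M',
        @cayleyDist _ iM (Set.range f') x y =
          @cayleyDist _ iN (Set.range g') (φ x) (φ y)) ∧
      ComputablePred (fun p : List (Fin 5) × List (Fin 5) =>
        @wordProd _ _ iM f' p.1 = @wordProd _ _ iM f' p.2) ∧
      ¬ComputablePred (fun p : List (Fin 5) × List (Fin 5) =>
        @wordProd _ _ iN g' p.1 = @wordProd _ _ iN g' p.2)) := by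
  refine ⟨⟨MX.normalFormIso hf hg, fun _ hw => MX.normalFormIso_wordProd hf hg hw,
    MX.cayleyDist_normalFormIso hf hg⟩, ?_⟩
  have hempty := presents_rewriteCon (MXRel ∅)
  have hhalt := presents_rewriteCon (MXRel haltingSet)
  exact ⟨_, _, _, _, _, _, ∅, haltingSet, hempty, hhalt,
    ⟨MX.normalFormIso hempty hhalt, MX.cayleyDist_normalFormIso hempty hhalt⟩,
    (MX.primrecPred_wordProd_eq primrecPred_mem_empty hempty).computablePred,
    fun h => not_computablePred_mem_haltingSet (MX.computablePred_mem_of_wordProd_eq hhalt h)⟩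
end

section
/- Let T₁ and T₂ be locally finite (undirected graph-theoretic) trees of bounded degree in which every vertex has degree at least 3. Then T₁ and T₂ are quasi-isometric as metric spaces (with the path metric). -/
/-!
Every such tree is quasi-isometric to the rooted binary tree of finite Boolean words, hence any
two of them are quasi-isometric to each other. Root the tree at `r`; since all degrees are at
least 3, every vertex has `k ≥ 2` children. Such a vertex is simulated in the binary tree by a
chain of `k - 1` binary nodes off which its children hang. This encodes each vertex as a word,
and the code of a child extends that of its parent by at most `k ≤ D` letters. Conversely,
reading a word letter by letter through the chains moves at most one edge of the tree per letter,
recovers `x` from its code, and ends at a vertex whose code the word extends by fewer than `D`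
letters. So encoding is a `D`-Lipschitz section of the `1`-Lipschitz decoding with `D`-dense image.
-/

open Finset

namespace SimpleGraph

variable {V W : Type*}

section Lipschitz

variable {G : SimpleGraph V} {H : SimpleGraph W} {f : V → W} {K : ℕ}

lemma dist_le_mul_length_of_forall_adj (hH : H.Connected)
    (hf : ∀ x y, G.Adj x y → H.dist (f x) (f y) ≤ K) {x y : V} (p : G.Walk x y) :
    H.dist (f x) (f y) ≤ K * p.length := by
  induction p with
  | nil => simp
  | @cons x z y hxz p ih =>
    calc H.dist (f x) (f y) ≤ H.dist (f x) (f z) + H.dist (f z) (f y) := hH.dist_triangle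
      _ ≤ K + K * p.length := add_le_add (hf _ _ hxz) ih
      _ = K * (p.cons hxz).length := by rw [Walk.length_cons]; ring

lemma dist_le_mul_dist_of_forall_adj (hG : G.Connected) (hH : H.Connected)
    (hf : ∀ x y, G.Adj x y → H.dist (f x) (f y) ≤ K) (x y : V) :
    H.dist (f x) (f y) ≤ K * G.dist x y := by
  obtain ⟨p, hp⟩ := hG.exists_walk_length_eq_dist x y
  exact hp ▸ dist_le_mul_length_of_forall_adj hH hf p

end Lipschitz

def QuasiIsometric (G : SimpleGraph V) (H : SimpleGraph W) : Prop :=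
  ∃ (f : V → W) (l e m : ℝ), 1 ≤ l ∧ 0 ≤ e ∧ 0 ≤ m ∧
    (∀ x y : V,
      (1 / l) * (G.dist x y : ℝ) - e ≤ (H.dist (f x) (f y) : ℝ) ∧
      (H.dist (f x) (f y) : ℝ) ≤ l * (G.dist x y : ℝ) + e) ∧
    (∀ y : W, ∃ x : V, (H.dist y (f x) : ℝ) ≤ m)

structure LipschitzSection (G : SimpleGraph V) (H : SimpleGraph W) (D : ℕ) where
  proj : W → V
  sec : V → W
  proj_sec : ∀ x, proj (sec x) = x
  dist_proj_le : ∀ a b, G.dist (proj a) (proj b) ≤ H.dist a b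
  dist_sec_le : ∀ x y, H.dist (sec x) (sec y) ≤ D * G.dist x y
  dist_sec_proj_le : ∀ a, H.dist a (sec (proj a)) ≤ D

namespace LipschitzSection

variable {U : Type*} {G : SimpleGraph V} {H : SimpleGraph W} {D : ℕ}

lemma dist_le_dist_sec (c : LipschitzSection G H D) (x y : V) :
    G.dist x y ≤ H.dist (c.sec x) (c.sec y) := by
  simpa only [c.proj_sec] using c.dist_proj_le (c.sec x) (c.sec y)

/-- `c₂.proj ∘ c₁.sec` is a quasi-isometry, with quasi-inverse `c₁.proj ∘ c₂.sec`. -/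
theorem quasiIsometric {G₂ : SimpleGraph U} {D₂ : ℕ} (c₁ : LipschitzSection G H D)
    (c₂ : LipschitzSection G₂ H D₂) (hH : H.Connected) : G.QuasiIsometric G₂ := by
  set f := c₂.proj ∘ c₁.sec
  have upper (x y : V) : G₂.dist (f x) (f y) ≤ D * G.dist x y :=
    (c₂.dist_proj_le _ _).trans (c₁.dist_sec_le x y)
  have lower (x y : V) : G.dist x y ≤ D₂ * G₂.dist (f x) (f y) + 2 * D₂ := by
    have h₁ := c₂.dist_sec_proj_le (c₁.sec x)
    have h₂ := c₂.dist_sec_proj_le (c₁.sec y)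
    rw [dist_comm] at h₂
    calc G.dist x y ≤ H.dist (c₁.sec x) (c₁.sec y) := c₁.dist_le_dist_sec x y
      _ ≤ H.dist (c₁.sec x) (c₂.sec (f x)) +
          (H.dist (c₂.sec (f x)) (c₂.sec (f y)) + H.dist (c₂.sec (f y)) (c₁.sec y)) :=
        hH.dist_triangle.trans (Nat.add_le_add_left hH.dist_triangle _)
      _ ≤ D₂ + (D₂ * G₂.dist (f x) (f y) + D₂) :=
        Nat.add_le_add h₁ (Nat.add_le_add (c₂.dist_sec_le _ _) h₂)
      _ = D₂ * G₂.dist (f x) (f y) + 2 * D₂ := by ring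
  refine ⟨f, D + D₂ + 1, 2, D, by linarith [D.cast_nonneg (α := ℝ), D₂.cast_nonneg (α := ℝ)],
    by norm_num, by positivity, fun x y => ⟨?_, ?_⟩, fun y => ⟨c₁.proj (c₂.sec y), ?_⟩⟩
  · have hl : (0 : ℝ) < D + D₂ + 1 := by positivity
    have : (G.dist x y : ℝ) ≤ D₂ * G₂.dist (f x) (f y) + 2 * D₂ := by exact_mod_cast lower x y
    rw [div_mul_eq_mul_div, one_mul, div_sub' hl.ne', div_le_iff₀ hl]
    nlinarith [(G₂.dist (f x) (f y)).cast_nonneg (α := ℝ), D.cast_nonneg (α := ℝ)]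
  · have : (G₂.dist (f x) (f y) : ℝ) ≤ D * G.dist x y := by exact_mod_cast upper x y
    nlinarith [(G.dist x y).cast_nonneg (α := ℝ)]
  · have := (c₂.dist_proj_le _ _).trans (c₁.dist_sec_proj_le (c₂.sec y))
    rw [c₂.proj_sec] at this
    exact_mod_cast this

end LipschitzSection

def binaryTree : SimpleGraph (List Bool) := fromRel fun a b => ∃ c, b = c :: a

lemma binaryTree_adj_cons (b : Bool) (l : List Bool) : binaryTree.Adj (b :: l) l :=
  (fromRel_adj _ _ _).2 ⟨by simp, Or.inr ⟨b, rfl⟩⟩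

lemma binaryTree_adj_iff {a b : List Bool} :
    binaryTree.Adj a b ↔ (∃ c, b = c :: a) ∨ ∃ c, a = c :: b := by
  refine (fromRel_adj _ _ _).trans ⟨And.right, fun h => ⟨?_, h⟩⟩
  rintro rfl
  obtain ⟨c, h⟩ | ⟨c, h⟩ := h <;> simpa using congrArg List.length h

lemma binaryTree_reachable_nil (l : List Bool) : binaryTree.Reachable l [] := by
  induction l with
  | nil => rfl
  | cons b l ih => exact (binaryTree_adj_cons b l).reachable.trans ih

lemma binaryTree_connected : binaryTree.Connected where
  preconnected a b := (binaryTree_reachable_nil a).trans (binaryTree_reachable_nil b).symm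
  nonempty := ⟨[]⟩

lemma binaryTree_dist_append_le (w t : List Bool) :
    binaryTree.dist (w ++ t) t ≤ w.length := by
  induction w with
  | nil => simp
  | cons b w ih =>
    calc binaryTree.dist (b :: w ++ t) t
        ≤ binaryTree.dist (b :: (w ++ t)) (w ++ t) + binaryTree.dist (w ++ t) t :=
          binaryTree_connected.dist_triangle
      _ ≤ 1 + w.length := by
          rw [dist_eq_one_iff_adj.2 (binaryTree_adj_cons b _)]; omega
      _ = (b :: w).length := by rw [List.length_cons, add_comm]

lemma ncard_neighborSet_eq_degree (G : SimpleGraph V) (v : V) [Fintype (G.neighborSet v)] :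
    (G.neighborSet v).ncard = G.degree v := by
  rw [Set.ncard_eq_toFinset_card', ← neighborFinset_def, card_neighborFinset_eq_degree]

section Tree

variable {G : SimpleGraph V}

lemma Connected.exists_adj_dist_add_one (hG : G.Connected) {r x : V} (hx : x ≠ r) :
    ∃ u, G.Adj x u ∧ G.dist r u + 1 = G.dist r x := by
  obtain ⟨p, -, hp⟩ := hG.exists_path_of_dist x r
  have hnil : ¬ p.Nil := Walk.not_nil_of_ne hx
  refine ⟨p.snd, Walk.adj_snd hnil, le_antisymm ?_ ?_⟩
  · have := G.dist_le p.tail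
    have := Walk.length_tail_add_one hnil
    rw [dist_comm (u := r), dist_comm (u := r) (v := x), ← hp]
    omega
  · calc G.dist r x ≤ G.dist r p.snd + G.dist p.snd x := hG.dist_triangle
      _ = G.dist r p.snd + 1 := by rw [dist_eq_one_iff_adj.2 (Walk.adj_snd hnil).symm]

lemma IsTree.mem_support_of_adj_of_dist_lt [DecidableEq V] (hG : G.IsTree) {r x u : V}
    {q : G.Walk r x} (hq : q.IsPath) (hadj : G.Adj u x) (hu : G.dist r u < G.dist r x) :
    u ∈ q.support := by
  by_contra hu'
  obtain ⟨p, hp, hlen⟩ := hG.connected.exists_path_of_dist r u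
  have hx := hG.isAcyclic.mem_support_of_ne_mem_support_of_adj_of_isPath hp hq hadj hu'
  have := G.dist_le (p.takeUntil x hx)
  have := p.length_takeUntil_le_length hx
  omega

lemma IsTree.eq_of_adj_of_dist_add_one (hG : G.IsTree) {r x u u' : V}
    (hu : G.Adj x u) (hu' : G.Adj x u')
    (hdu : G.dist r u + 1 = G.dist r x) (hdu' : G.dist r u' + 1 = G.dist r x) : u = u' := by
  classical
  obtain ⟨q, hq, -⟩ := hG.connected.exists_path_of_dist r x
  rw [hG.isAcyclic.eq_penultimate_of_adj_end hq hu
      (hG.mem_support_of_adj_of_dist_lt hq hu.symm (by omega)),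
    hG.isAcyclic.eq_penultimate_of_adj_end hq hu'
      (hG.mem_support_of_adj_of_dist_lt hq hu'.symm (by omega))]

section RootedTree

variable (G) (r : V)

open Classical in
noncomputable def parent (x : V) : V :=
  if h : ∃ u, G.Adj x u ∧ G.dist r u + 1 = G.dist r x then h.choose else x

open Classical in
noncomputable def children [G.LocallyFinite] (x : V) : Finset V :=
  {y ∈ G.neighborFinset x | G.dist r y = G.dist r x + 1}

noncomputable def child [G.LocallyFinite] (x : V) (j : ℕ) : V :=
  (G.children r x).toList.getD j x

open Classical in
noncomputable def childIndex [G.LocallyFinite] (y : V) : ℕ :=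
  (G.children r (G.parent r y)).toList.idxOf y

variable {G r}

lemma adj_parent (hG : G.Connected) {x : V} (hx : x ≠ r) : G.Adj x (G.parent r x) := by
  rw [parent, dif_pos (hG.exists_adj_dist_add_one hx)]
  exact (hG.exists_adj_dist_add_one hx).choose_spec.1

lemma dist_parent_add_one (hG : G.Connected) {x : V} (hx : x ≠ r) :
    G.dist r (G.parent r x) + 1 = G.dist r x := by
  rw [parent, dif_pos (hG.exists_adj_dist_add_one hx)]
  exact (hG.exists_adj_dist_add_one hx).choose_spec.2

lemma IsTree.parent_eq_of_adj (hG : G.IsTree) {x u : V} (hu : G.Adj x u)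
    (hd : G.dist r u + 1 = G.dist r x) : G.parent r x = u := by
  have hx : x ≠ r := by rintro rfl; simp at hd
  exact hG.eq_of_adj_of_dist_add_one (adj_parent hG.connected hx) hu
    (dist_parent_add_one hG.connected hx) hd

variable [G.LocallyFinite]

lemma mem_children {x y : V} :
    y ∈ G.children r x ↔ G.Adj x y ∧ G.dist r y = G.dist r x + 1 := by
  simp [children]

lemma card_children_le_degree (x : V) : #(G.children r x) ≤ G.degree x := by
  classical
  exact card_filter_le _ _

lemma IsTree.degree_le_card_children_add_one (hG : G.IsTree) (x : V) :
    G.degree x ≤ #(G.children r x) + 1 := by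
  classical
  have hsub : G.neighborFinset x ⊆ insert (G.parent r x) (G.children r x) := by
    intro y hy
    rw [mem_neighborFinset] at hy
    rw [mem_insert, mem_children]
    obtain h | h := hG.dist_eq_dist_add_one_of_adj r hy
    · exact Or.inl (hG.parent_eq_of_adj hy h.symm).symm
    · exact Or.inr ⟨hy, h⟩
  rw [← card_neighborFinset_eq_degree]
  exact (card_le_card hsub).trans (card_insert_le _ _)

lemma IsTree.two_le_card_children (hG : G.IsTree) {x : V} (hx : 3 ≤ G.degree x) :
    2 ≤ #(G.children r x) := by
  have := hG.degree_le_card_children_add_one (r := r) x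
  omega

lemma IsTree.parent_eq_of_mem_children (hG : G.IsTree) {x y : V} (hy : y ∈ G.children r x) :
    G.parent r y = x := by
  rw [mem_children] at hy
  exact hG.parent_eq_of_adj hy.1.symm hy.2.symm

lemma ne_of_mem_children {x y : V} (hy : y ∈ G.children r x) : y ≠ r := by
  rintro rfl
  simp [mem_children] at hy

lemma child_mem_children {x : V} {j : ℕ} (hj : j < #(G.children r x)) :
    G.child r x j ∈ G.children r x := by
  rw [child, List.getD_eq_getElem _ _ (by rwa [length_toList]), ← mem_toList]
  exact List.getElem_mem _

lemma exists_child_eq_of_mem_children {x y : V} (hy : y ∈ G.children r x) :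
    ∃ j < #(G.children r x), G.child r x j = y := by
  obtain ⟨j, hj, rfl⟩ := List.mem_iff_getElem.1 (mem_toList.2 hy)
  exact ⟨j, length_toList _ ▸ hj, List.getD_eq_getElem _ _ _⟩

lemma IsTree.childIndex_child (hG : G.IsTree) {x : V} {j : ℕ} (hj : j < #(G.children r x)) :
    G.childIndex r (G.child r x j) = j := by
  classical
  rw [childIndex, hG.parent_eq_of_mem_children (child_mem_children hj), child,
    List.getD_eq_getElem _ _ (by rwa [length_toList])]
  exact (nodup_toList _).idxOf_getElem _ _

lemma IsTree.childIndex_lt_card (hG : G.IsTree) {y : V} (hy : y ≠ r) :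
    G.childIndex r y < #(G.children r (G.parent r y)) := by
  classical
  rw [childIndex, ← length_toList, List.idxOf_lt_length_iff, mem_toList, mem_children]
  exact ⟨(adj_parent hG.connected hy).symm, (dist_parent_add_one hG.connected hy).symm⟩

lemma IsTree.child_childIndex (hG : G.IsTree) {y : V} (hy : y ≠ r) :
    G.child r (G.parent r y) (G.childIndex r y) = y := by
  classical
  have h := hG.childIndex_lt_card hy
  rw [child, List.getD_eq_getElem _ _ (by rwa [length_toList])]
  exact List.getElem_idxOf _

end RootedTree

namespace BinaryCoding

def chainCode (j k : ℕ) : List Bool :=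
  if j + 1 < k then true :: List.replicate j false else List.replicate j false

variable (G) (r : V) [G.LocallyFinite]

/-- The state `(x, j)` sits on the chain of `x` after its children `0, …, j - 1`; the last node
of the chain, `j + 2 = #(G.children r x)`, leads to the last two children. -/
noncomputable def step : Bool → V × ℕ → V × ℕ
  | true, (x, j) => (G.child r x j, 0)
  | false, (x, j) =>
    if j + 2 < #(G.children r x) then (x, j + 1) else (G.child r x (j + 1), 0)

noncomputable def readWord (l : List Bool) : V × ℕ := l.foldr (step G r) (r, 0)

noncomputable def decode (l : List Bool) : V := (readWord G r l).1

noncomputable def encode (x : V) : List Bool :=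
  if G.dist r (G.parent r x) < G.dist r x then
    chainCode (G.childIndex r x) #(G.children r (G.parent r x)) ++ encode (G.parent r x)
  else []
termination_by G.dist r x

variable {G r}

lemma encode_root : encode G r r = [] := by
  rw [encode, if_neg (by simp)]

lemma encode_of_ne (hG : G.Connected) {x : V} (hx : x ≠ r) :
    encode G r x =
      chainCode (G.childIndex r x) #(G.children r (G.parent r x)) ++ encode G r (G.parent r x) := by
  rw [encode, if_pos (by have := dist_parent_add_one hG hx; omega)]

lemma encode_child (hG : G.IsTree) {x : V} {j : ℕ} (hj : j < #(G.children r x)) :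
    encode G r (G.child r x j) = chainCode j #(G.children r x) ++ encode G r x := by
  have hmem := child_mem_children hj
  rw [encode_of_ne hG.connected (ne_of_mem_children hmem), hG.parent_eq_of_mem_children hmem,
    hG.childIndex_child hj]

lemma foldr_step_replicate {x : V} {j k : ℕ} (h : j + k + 1 < #(G.children r x)) :
    (List.replicate k false).foldr (step G r) (x, j) = (x, j + k) := by
  induction k with
  | zero => rfl
  | succ k ih =>
    rw [List.replicate_succ, List.foldr_cons, ih (by omega), step, if_pos (by omega)]
    rfl

lemma foldr_step_chainCode {x : V} {j : ℕ} (hj : j < #(G.children r x))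
    (h2 : 2 ≤ #(G.children r x)) :
    (chainCode j #(G.children r x)).foldr (step G r) (x, 0) = (G.child r x j, 0) := by
  unfold chainCode
  split_ifs with h
  · rw [List.foldr_cons, foldr_step_replicate (by omega), zero_add, step]
  · obtain ⟨i, rfl⟩ : ∃ i, j = i + 1 := ⟨j - 1, by omega⟩
    rw [List.replicate_succ, List.foldr_cons, foldr_step_replicate (by omega), zero_add, step,
      if_neg (by omega)]

lemma readWord_cons (b : Bool) (l : List Bool) :
    readWord G r (b :: l) = step G r b (readWord G r l) := rfl

lemma readWord_append (w l : List Bool) :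
    readWord G r (w ++ l) = w.foldr (step G r) (readWord G r l) :=
  List.foldr_append

lemma readWord_encode (hG : G.IsTree) (hdeg : ∀ v, 3 ≤ G.degree v) (x : V) :
    readWord G r (encode G r x) = (x, 0) := by
  induction hd : G.dist r x using Nat.strong_induction_on generalizing x with
  | _ n ih =>
    by_cases hx : x = r
    · rw [hx, encode_root]
      rfl
    have hp := dist_parent_add_one hG.connected hx
    have hi := hG.childIndex_lt_card hx
    rw [← hG.child_childIndex hx, encode_child hG hi, readWord_append, ih _ (by omega) _ rfl,
      foldr_step_chainCode hi (hG.two_le_card_children (hdeg _))]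

lemma readWord_spec (hG : G.IsTree) (hdeg : ∀ v, 3 ≤ G.degree v) (l : List Bool) :
    (readWord G r l).2 + 1 < #(G.children r (readWord G r l).1) ∧
      l = List.replicate (readWord G r l).2 false ++ encode G r (readWord G r l).1 := by
  induction l with
  | nil => exact ⟨hG.two_le_card_children (hdeg r), by simp [readWord, encode_root]⟩
  | cons b l ih =>
    rw [readWord_cons]
    generalize readWord G r l = s at ih ⊢
    obtain ⟨x, j⟩ := s
    obtain ⟨hj : j + 1 < #(G.children r x), rfl⟩ := ih
    have hchild (i : ℕ) (hi : i < #(G.children r x)) :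
        0 + 1 < #(G.children r (G.child r x i)) := hG.two_le_card_children (hdeg _)
    cases b with
    | true =>
      refine ⟨hchild j (by omega), ?_⟩
      rw [step, encode_child hG (by omega), chainCode, if_pos hj]
      rfl
    | false =>
      by_cases h : j + 2 < #(G.children r x)
      · simp only [step, if_pos h]
        exact ⟨h, rfl⟩
      · simp only [step, if_neg h]
        refine ⟨hchild (j + 1) (by omega), ?_⟩
        rw [encode_child hG (by omega), chainCode, if_neg h]
        rfl

lemma decode_encode (hG : G.IsTree) (hdeg : ∀ v, 3 ≤ G.degree v) (x : V) :
    decode G r (encode G r x) = x := by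
  rw [decode, readWord_encode hG hdeg]

lemma decode_cons_eq_or_adj (hG : G.IsTree) (hdeg : ∀ v, 3 ≤ G.degree v) (b : Bool)
    (l : List Bool) :
    decode G r (b :: l) = decode G r l ∨ G.Adj (decode G r l) (decode G r (b :: l)) := by
  have hj := (readWord_spec (r := r) hG hdeg l).1
  rw [decode, decode, readWord_cons]
  generalize readWord G r l = s at hj ⊢
  obtain ⟨x, j⟩ := s
  dsimp only at hj
  have hadj (i : ℕ) (hi : i < #(G.children r x)) : G.Adj x (G.child r x i) :=
    (mem_children.1 (child_mem_children hi)).1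
  cases b with
  | true => exact Or.inr (hadj j (by omega))
  | false =>
    by_cases h : j + 2 < #(G.children r x)
    · simp only [step, if_pos h, true_or]
    · simp only [step, if_neg h]
      exact Or.inr (hadj _ (by omega))

lemma dist_decode_le (hG : G.IsTree) (hdeg : ∀ v, 3 ≤ G.degree v) (a b : List Bool) :
    G.dist (decode G r a) (decode G r b) ≤ binaryTree.dist a b := by
  have hcons (c : Bool) (l : List Bool) : G.dist (decode G r l) (decode G r (c :: l)) ≤ 1 := by
    rcases decode_cons_eq_or_adj hG hdeg c l with h | h
    · rw [h, dist_self]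
      exact zero_le_one
    · rw [dist_eq_one_iff_adj.2 h]
  refine one_mul (binaryTree.dist a b) ▸
    dist_le_mul_dist_of_forall_adj binaryTree_connected hG.connected ?_ a b
  intro a b h
  rcases binaryTree_adj_iff.1 h with ⟨c, rfl⟩ | ⟨c, rfl⟩
  · exact hcons c a
  · exact dist_comm (G := G) ▸ hcons c b

lemma length_chainCode_le (j k : ℕ) : (chainCode j k).length ≤ j + 1 := by
  unfold chainCode
  split_ifs <;> simp

lemma dist_encode_child_le (hG : G.IsTree) {x : V} {j : ℕ} (hj : j < #(G.children r x)) :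
    binaryTree.dist (encode G r (G.child r x j)) (encode G r x) ≤ #(G.children r x) := by
  rw [encode_child hG hj]
  exact (binaryTree_dist_append_le _ _).trans ((length_chainCode_le _ _).trans hj)

lemma dist_encode_le {D : ℕ} (hG : G.IsTree) (hD : ∀ v, G.degree v ≤ D) (x y : V) :
    binaryTree.dist (encode G r x) (encode G r y) ≤ D * G.dist x y := by
  have hchild {x y : V} (hy : y ∈ G.children r x) :
      binaryTree.dist (encode G r y) (encode G r x) ≤ D := by
    obtain ⟨j, hj, rfl⟩ := exists_child_eq_of_mem_children hy
    exact (dist_encode_child_le hG hj).trans ((card_children_le_degree x).trans (hD x))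
  refine dist_le_mul_dist_of_forall_adj hG.connected binaryTree_connected ?_ x y
  intro x y h
  rcases hG.dist_eq_dist_add_one_of_adj r h with hd | hd
  · exact hchild (mem_children.2 ⟨h.symm, hd⟩)
  · exact dist_comm (G := binaryTree) ▸ hchild (mem_children.2 ⟨h, hd⟩)

lemma dist_encode_decode_le {D : ℕ} (hG : G.IsTree) (hdeg : ∀ v, 3 ≤ G.degree v)
    (hD : ∀ v, G.degree v ≤ D) (l : List Bool) :
    binaryTree.dist l (encode G r (decode G r l)) ≤ D := by
  obtain ⟨hj, hl⟩ := readWord_spec (r := r) hG hdeg l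
  rw [decode]
  generalize readWord G r l = s at hj hl
  obtain ⟨x, j⟩ := s
  dsimp only at hj hl ⊢
  calc binaryTree.dist l (encode G r x)
      ≤ (List.replicate j false).length := hl ▸ binaryTree_dist_append_le _ _
    _ ≤ D := by
      have := (card_children_le_degree (r := r) x).trans (hD x)
      rw [List.length_replicate]
      omega

end BinaryCoding

open BinaryCoding in
noncomputable def IsTree.binaryTreeSection (hG : G.IsTree) [G.LocallyFinite] (r : V) {D : ℕ}
    (hdeg : ∀ v, 3 ≤ G.degree v) (hD : ∀ v, G.degree v ≤ D) :
    LipschitzSection G binaryTree D where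
  proj := decode G r
  sec := encode G r
  proj_sec := decode_encode hG hdeg
  dist_proj_le := dist_decode_le hG hdeg
  dist_sec_le := dist_encode_le hG hD
  dist_sec_proj_le := dist_encode_decode_le hG hdeg hD

end Tree

end SimpleGraph

/-- Let `T₁` and `T₂` be locally finite trees of bounded degree in which every vertex has
degree at least 3. Then `T₁` and `T₂` are quasi-isometric with respect to their path
metrics: there is a map `f` and constants `l ≥ 1`, `e, m ≥ 0` with
`(1/l)·d(x,y) − e ≤ d(f x, f y) ≤ l·d(x,y) + e` for all vertices `x, y`, whose image is
`m`-quasi-dense. -/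
theorem stmt_18 {V₁ V₂ : Type*} (T₁ : SimpleGraph V₁) (T₂ : SimpleGraph V₂)
    (h₁ : T₁.IsTree) (h₂ : T₂.IsTree)
    (hlf₁ : ∀ v : V₁, (T₁.neighborSet v).Finite)
    (hlf₂ : ∀ v : V₂, (T₂.neighborSet v).Finite)
    (hbd₁ : ∃ D : ℕ, ∀ v : V₁, (T₁.neighborSet v).ncard ≤ D)
    (hbd₂ : ∃ D : ℕ, ∀ v : V₂, (T₂.neighborSet v).ncard ≤ D)
    (hmin₁ : ∀ v : V₁, 3 ≤ (T₁.neighborSet v).ncard)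
    (hmin₂ : ∀ v : V₂, 3 ≤ (T₂.neighborSet v).ncard) :
    ∃ (f : V₁ → V₂) (l e m : ℝ), 1 ≤ l ∧ 0 ≤ e ∧ 0 ≤ m ∧
      (∀ x y : V₁,
        (1 / l) * (T₁.dist x y : ℝ) - e ≤ (T₂.dist (f x) (f y) : ℝ) ∧
        (T₂.dist (f x) (f y) : ℝ) ≤ l * (T₁.dist x y : ℝ) + e) ∧
      (∀ y : V₂, ∃ x : V₁, (T₂.dist y (f x) : ℝ) ≤ m) := by
  let : T₁.LocallyFinite := fun v => (hlf₁ v).fintype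
  let : T₂.LocallyFinite := fun v => (hlf₂ v).fintype
  simp only [SimpleGraph.ncard_neighborSet_eq_degree] at hbd₁ hbd₂ hmin₁ hmin₂
  obtain ⟨D₁, hD₁⟩ := hbd₁
  obtain ⟨D₂, hD₂⟩ := hbd₂
  obtain ⟨r₁⟩ := h₁.connected.nonempty
  obtain ⟨r₂⟩ := h₂.connected.nonempty
  exact (h₁.binaryTreeSection r₁ hmin₁ hD₁).quasiIsometric (h₂.binaryTreeSection r₂ hmin₂ hD₂)
    SimpleGraph.binaryTree_connected
end
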